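/- Assume f satisfies (f_reg), (f_eq), (f_0). Let u be a solution of the Cauchy problem with datum d > 0 on [R1,R2] and let r1 and H be as defined. If M > 0, r ∈ [R1,r1] and u(r) + |u'(r)| ≤ M, then H(r1) ≤ M^p/p' + max{F̂(0), F̂(M)}. Consequently, if lim_{d→∞} H_d(r1(d)) = +∞ along a family of solutions, then u_d(r) + |u_d'(r)| → +∞ as d → ∞ uniformly for r ∈ [R1, r1(d)]. -/

import Mathlib

open Real Set Filter Topology

noncomputable def phip (p s : ℝ) : ℝ := |s| ^ (p - 2) * s

def Freg (f : ℝ → ℝ) : Prop :=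
  ContinuousOn f (Ici 0) ∧ ContDiffOn ℝ 1 f (Ioi 0)

def Feq (f : ℝ → ℝ) : Prop :=
  f 0 = 0 ∧ f 1 = 0 ∧ (∀ s : ℝ, 0 < s → s < 1 → f s < 0) ∧ (∀ s : ℝ, 1 < s → 0 < f s)

def Fzero (p : ℝ) (f : ℝ → ℝ) : Prop :=
  ∃ c : ℝ, ∀ᶠ s in 𝓝[>] (0:ℝ), c ≤ f s / s ^ (p - 1)

noncomputable def pstar (p : ℝ) (N : ℕ) : EReal :=
  if p < (N:ℝ) then (((N:ℝ) * p / ((N:ℝ) - p) : ℝ) : EReal) else ⊤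

noncomputable def fstar (f : ℝ → ℝ) (s : ℝ) : ℝ := sSup (f '' Icc 1 s)

noncomputable def Fint (f : ℝ → ℝ) (s : ℝ) : ℝ := ∫ σ in (1:ℝ)..s, f σ

def Fsubl (p : ℝ) (f : ℝ → ℝ) : Prop :=
  ∃ M : ℝ, 0 < M ∧ ∀ ε > 0, ∀ᶠ s in atTop, f s / s ^ (p - 1) ≤ M + ε

def FsubcWith (p : ℝ) (N : ℕ) (f : ℝ → ℝ) (η : ℝ) : Prop :=
  (∀ c : ℝ, ∃ᶠ s in atTop, c < f s / s ^ (p - 1)) ∧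
  0 < η ∧ η < 1 ∧
  ∃ L : ℝ, (L : EReal) < pstar p N ∧
    ∀ᶠ s in atTop, fstar f s * s / Fint f (η * s) ≤ L

def Fsubc (p : ℝ) (N : ℕ) (f : ℝ → ℝ) : Prop := ∃ η : ℝ, FsubcWith p N f η

/-- A radial solution of the Neumann problem on `[R1,R2]`. -/
def NeumannSol (p : ℝ) (N : ℕ) (R1 R2 : ℝ) (f u : ℝ → ℝ) : Prop :=
  (∀ x ∈ Icc R1 R2, DifferentiableAt ℝ u x) ∧
  ContinuousOn (deriv u) (Icc R1 R2) ∧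
  (∀ x ∈ Icc R1 R2, 0 < u x) ∧
  deriv u R1 = 0 ∧ deriv u R2 = 0 ∧
  ContinuousOn (fun x => x ^ (N - 1) * phip p (deriv u x)) (Icc R1 R2) ∧
  ∀ x ∈ Ioc R1 R2,
    HasDerivAt (fun t => t ^ (N - 1) * phip p (deriv u t)) (-(x ^ (N - 1)) * f (u x)) x

noncomputable def fhat (f : ℝ → ℝ) (s : ℝ) : ℝ := if 0 ≤ s then f s else 0

noncomputable def Fhat (f : ℝ → ℝ) (s : ℝ) : ℝ := ∫ σ in (1:ℝ)..s, fhat f σ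

/-- A solution of the Cauchy problem with datum `d`, for the nonlinearity `g`. -/
def CauchySol (p : ℝ) (N : ℕ) (R1 R2 : ℝ) (g u : ℝ → ℝ) (d : ℝ) : Prop :=
  (∀ x ∈ Icc R1 R2, DifferentiableAt ℝ u x) ∧
  ContinuousOn (deriv u) (Icc R1 R2) ∧
  u R1 = d ∧ deriv u R1 = 0 ∧
  ContinuousOn (fun x => x ^ (N - 1) * phip p (deriv u x)) (Icc R1 R2) ∧
  ∀ x ∈ Ioc R1 R2,
    HasDerivAt (fun t => t ^ (N - 1) * phip p (deriv u t)) (-(x ^ (N - 1)) * g (u x)) x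

noncomputable def rOne (R1 R2 : ℝ) (u : ℝ → ℝ) : ℝ :=
  sSup {x | x ∈ Icc R1 R2 ∧ ∀ s ∈ Ico R1 x, 0 < u s}

noncomputable def rZero (R2 η d : ℝ) (u : ℝ → ℝ) : ℝ :=
  sSup {x | x ∈ Icc 0 R2 ∧ ∀ s ∈ Ico 0 x, η * d < u s}

noncomputable def energy (p : ℝ) (f u : ℝ → ℝ) (x : ℝ) : ℝ :=
  |deriv u x| ^ p / (p / (p - 1)) + Fhat f (u x)

def NonConstOn (R1 R2 : ℝ) (u : ℝ → ℝ) : Prop :=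
  ∃ x ∈ Icc R1 R2, ∃ x' ∈ Icc R1 R2, u x ≠ u x'

def DistinctOn (R1 R2 : ℝ) (u v : ℝ → ℝ) : Prop :=
  ∃ x ∈ Icc R1 R2, u x ≠ v x

noncomputable def nOverPstar (p : ℝ) (N : ℕ) : ℝ :=
  if p < (N:ℝ) then ((N:ℝ) - p) / p else 0

/-!
Multiplying the equation `(r^(N-1) φ_p(u'))' = -r^(N-1) f̂(u)` by `u'` shows that the energy
`H = |u'|^p / p' + F̂(u)` has derivative `-(N-1) |u'|^p / r ≤ 0`, so `H` is nonincreasing.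
Hence `H(r₁) ≤ H(r) ≤ M^p / p' + F̂(u(r))` whenever `u(r) + |u'(r)| ≤ M`, and since `F̂` decreases
on `[0,1]` and increases on `[1,∞)`, `F̂(u(r)) ≤ max (F̂ 0) (F̂ M)` because `0 ≤ u(r) ≤ M` before the
first zero `r₁`. If `H(r₁)` blows up, no such uniform bound `M` can survive.
-/

section phip

variable {p : ℝ}

lemma abs_phip (hp : p ≠ 1) (s : ℝ) : |phip p s| = |s| ^ (p - 1) := by
  rcases eq_or_ne s 0 with rfl | hs
  · simp [phip, Real.zero_rpow (sub_ne_zero.2 hp)]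
  · rw [phip, abs_mul, abs_of_nonneg (by positivity), show p - 1 = (p - 2) + 1 by ring,
      Real.rpow_add_one (abs_ne_zero.2 hs)]

lemma abs_phip_rpow_conj (hp : p ≠ 1) (s : ℝ) : |phip p s| ^ (p / (p - 1)) = |s| ^ p := by
  rw [abs_phip hp, ← Real.rpow_mul (abs_nonneg s), mul_div_cancel₀ _ (sub_ne_zero.2 hp)]

lemma phip_conj_phip (hp : p ≠ 1) (s : ℝ) : phip (p / (p - 1)) (phip p s) = s := by
  rcases eq_or_ne s 0 with rfl | hs
  · simp [phip]
  · have hp1 : p - 1 ≠ 0 := sub_ne_zero.2 hp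
    have hexp : (p - 1) * (p / (p - 1) - 2) + (p - 2) = 0 := by field_simp; ring
    rw [phip, abs_phip hp]
    unfold phip
    rw [← Real.rpow_mul (abs_nonneg s), ← mul_assoc,
      ← Real.rpow_add (abs_pos.2 hs), hexp, Real.rpow_zero, one_mul]

lemma mul_phip_self (hp : p ≠ 0) (s : ℝ) : s * phip p s = |s| ^ p := by
  rcases eq_or_ne s 0 with rfl | hs
  · simp [phip, Real.zero_rpow hp]
  · rw [phip, show s * (|s| ^ (p - 2) * s) = |s| ^ (p - 2) * |s| ^ (2 : ℝ) by
      rw [Real.rpow_two, sq_abs]; ring, ← Real.rpow_add (abs_pos.2 hs), sub_add_cancel]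

end phip

lemma HasDerivAt.abs_rpow_div {q : ℝ} (hq : 1 < q) {w : ℝ → ℝ} {w' x : ℝ}
    (hw : HasDerivAt w w' x) :
    HasDerivAt (fun t => |w t| ^ q / q) (phip q (w x) * w') x := by
  refine (((hasDerivAt_abs_rpow (w x) hq).comp x hw).div_const q).congr_deriv ?_
  rw [phip]
  field_simp

lemma HasDerivAt.of_pow_mul {w : ℝ → ℝ} {n : ℕ} {x a : ℝ} (hx : 0 < x)
    (h : HasDerivAt (fun t => t ^ n * w t) (-(x ^ n) * a) x) :
    HasDerivAt w (-a - n * w x / x) x := by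
  have hquot := h.div (hasDerivAt_pow n x) (pow_ne_zero n hx.ne')
  have hw : (fun t => t ^ n * w t / t ^ n) =ᶠ[𝓝 x] w := by
    filter_upwards [Ioi_mem_nhds hx] with t ht
    exact mul_div_cancel_left₀ _ (pow_ne_zero n (ne_of_gt ht))
  refine (hquot.congr_of_eventuallyEq hw.symm).congr_deriv ?_
  cases n with
  | zero => simp
  | succ k =>
    rw [Nat.add_sub_cancel]
    field_simp
    ring

section Fhat

variable {f : ℝ → ℝ}

lemma continuous_fhat (hf : ContinuousOn f (Ici 0)) (hf0 : f 0 = 0) : Continuous (fhat f) := by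
  have hmax : fhat f = fun s => f (max s 0) := by
    funext s
    rcases le_or_gt 0 s with hs | hs
    · rw [fhat, if_pos hs, max_eq_left hs]
    · rw [fhat, if_neg (not_le.2 hs), max_eq_right hs.le, hf0]
  rw [hmax]
  exact hf.comp_continuous (continuous_id.max continuous_const) (fun s => le_max_right s 0)

lemma hasDerivAt_Fhat (hf : ContinuousOn f (Ici 0)) (hf0 : f 0 = 0) (s : ℝ) :
    HasDerivAt (Fhat f) (fhat f s) s :=
  have hc := continuous_fhat hf hf0
  intervalIntegral.integral_hasDerivAt_right (hc.intervalIntegrable _ _)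
    (hc.stronglyMeasurableAtFilter _ _) hc.continuousAt

lemma Fhat_antitoneOn (hf : ContinuousOn f (Ici 0)) (heq : Feq f) :
    AntitoneOn (Fhat f) (Icc 0 1) := by
  obtain ⟨hf0, -, hneg, -⟩ := heq
  refine antitoneOn_of_hasDerivWithinAt_nonpos (convex_Icc 0 1)
    (fun s _ => (hasDerivAt_Fhat hf hf0 s).continuousAt.continuousWithinAt)
    (fun s _ => (hasDerivAt_Fhat hf hf0 s).hasDerivWithinAt) fun s hs => ?_
  rw [interior_Icc] at hs
  rw [fhat, if_pos hs.1.le]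
  exact (hneg s hs.1 hs.2).le

lemma Fhat_monotoneOn (hf : ContinuousOn f (Ici 0)) (heq : Feq f) :
    MonotoneOn (Fhat f) (Ici 1) := by
  obtain ⟨hf0, -, -, hpos⟩ := heq
  refine monotoneOn_of_hasDerivWithinAt_nonneg (convex_Ici 1)
    (fun s _ => (hasDerivAt_Fhat hf hf0 s).continuousAt.continuousWithinAt)
    (fun s _ => (hasDerivAt_Fhat hf hf0 s).hasDerivWithinAt) fun s hs => ?_
  rw [interior_Ici] at hs
  rw [fhat, if_pos (zero_le_one.trans hs.le)]
  exact (hpos s hs).le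

lemma Fhat_le_max (hf : ContinuousOn f (Ici 0)) (heq : Feq f) {t M : ℝ} (ht : t ∈ Icc 0 M) :
    Fhat f t ≤ max (Fhat f 0) (Fhat f M) := by
  rcases le_or_gt t 1 with h1 | h1
  · exact le_max_of_le_left <|
      Fhat_antitoneOn hf heq ⟨le_rfl, zero_le_one⟩ ⟨ht.1, h1⟩ ht.1
  · exact le_max_of_le_right <|
      Fhat_monotoneOn hf heq (mem_Ici.2 h1.le) (mem_Ici.2 (h1.le.trans ht.2)) ht.2

end Fhat

section rOne

variable {R1 R2 : ℝ} {u : ℝ → ℝ}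

lemma rOne_mem (h12 : R1 ≤ R2) : rOne R1 R2 u ∈ Icc R1 R2 := by
  have hR1 : R1 ∈ {x | x ∈ Icc R1 R2 ∧ ∀ s ∈ Ico R1 x, 0 < u s} := ⟨⟨le_rfl, h12⟩, by simp⟩
  exact ⟨le_csSup ⟨R2, fun x hx => hx.1.2⟩ hR1, csSup_le ⟨R1, hR1⟩ fun x hx => hx.1.2⟩

lemma pos_of_mem_Ico_rOne (h12 : R1 ≤ R2) {s : ℝ} (hs : s ∈ Ico R1 (rOne R1 R2 u)) : 0 < u s := by
  have hR1 : R1 ∈ {x | x ∈ Icc R1 R2 ∧ ∀ s ∈ Ico R1 x, 0 < u s} := ⟨⟨le_rfl, h12⟩, by simp⟩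
  obtain ⟨x, hx, hsx⟩ := exists_lt_of_lt_csSup ⟨R1, hR1⟩ hs.2
  exact hx.2 s ⟨hs.1, hsx⟩

lemma nonneg_of_mem_Icc_rOne (h12 : R1 ≤ R2) (hu : ContinuousOn u (Icc R1 R2))
    (hR1 : 0 ≤ u R1) {x : ℝ} (hx : x ∈ Icc R1 (rOne R1 R2 u)) : 0 ≤ u x := by
  have hr := rOne_mem (u := u) h12
  rcases hr.1.eq_or_lt with heq | hlt
  · rwa [le_antisymm (heq ▸ hx.2) hx.1]
  · rw [← closure_Ico hlt.ne] at hx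
    exact le_on_closure (fun s hs => (pos_of_mem_Ico_rOne h12 hs).le) continuousOn_const
      (hu.mono (by rw [closure_Ico hlt.ne]; exact Icc_subset_Icc_right hr.2)) hx

end rOne

namespace CauchySol

variable {p : ℝ} {N : ℕ} {R1 R2 d : ℝ} {f u : ℝ → ℝ}

lemma hasDerivAt_energy (hp : 1 < p) (hR1 : 0 ≤ R1) (hf : ContinuousOn f (Ici 0))
    (hf0 : f 0 = 0) (hu : CauchySol p N R1 R2 (fhat f) u d) {x : ℝ} (hx : x ∈ Ioc R1 R2) :
    HasDerivAt (energy p f u) (-((N - 1 : ℕ) * |deriv u x| ^ p / x)) x := by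
  obtain ⟨hdiff, -, -, -, -, hode⟩ := hu
  have hp1 : p ≠ 1 := hp.ne'
  have hq : 1 < p / (p - 1) := by rw [lt_div_iff₀ (by linarith)]; linarith
  have hflux : HasDerivAt (fun t => phip p (deriv u t))
      (-fhat f (u x) - (N - 1 : ℕ) * phip p (deriv u x) / x) x :=
    (hode x hx).of_pow_mul (hR1.trans_lt hx.1)
  have hkinetic := hflux.abs_rpow_div hq
  have hpotential := (hasDerivAt_Fhat hf hf0 (u x)).comp x
    (hdiff x (Ioc_subset_Icc_self hx)).hasDerivAt
  have henergy : energy p f u =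
      fun t => |phip p (deriv u t)| ^ (p / (p - 1)) / (p / (p - 1)) + Fhat f (u t) := by
    funext t
    rw [energy, abs_phip_rpow_conj hp1]
  rw [henergy]
  refine (hkinetic.add hpotential).congr_deriv ?_
  rw [phip_conj_phip hp1, ← mul_phip_self (by linarith : p ≠ 0)]
  ring

lemma energy_antitoneOn (hp : 1 < p) (hR1 : 0 ≤ R1) (hf : ContinuousOn f (Ici 0))
    (hf0 : f 0 = 0) (hu : CauchySol p N R1 R2 (fhat f) u d) :
    AntitoneOn (energy p f u) (Icc R1 R2) := by
  have hFhat : Continuous (Fhat f) :=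
    continuous_iff_continuousAt.2 fun s => (hasDerivAt_Fhat hf hf0 s).continuousAt
  have hcont : ContinuousOn (energy p f u) (Icc R1 R2) :=
    ((hu.2.1.abs.rpow_const fun _ _ => Or.inr (by linarith)).div_const _).add
      (hFhat.comp_continuousOn fun x hx => (hu.1 x hx).continuousAt.continuousWithinAt)
  refine antitoneOn_of_hasDerivWithinAt_nonpos (convex_Icc R1 R2) hcont
    (f' := fun x => -((N - 1 : ℕ) * |deriv u x| ^ p / x)) (fun x hx => ?_) (fun x hx => ?_)
  all_goals rw [interior_Icc] at hx
  · exact (hu.hasDerivAt_energy hp hR1 hf hf0 (Ioo_subset_Ioc_self hx)).hasDerivWithinAt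
  · have hx0 : 0 < x := hR1.trans_lt hx.1
    exact neg_nonpos.2 (by positivity)

lemma energy_rOne_le (hp : 1 < p) (hR1 : 0 ≤ R1) (h12 : R1 ≤ R2) (hf : ContinuousOn f (Ici 0))
    (heq : Feq f) (hd : 0 ≤ d) (hu : CauchySol p N R1 R2 (fhat f) u d) {M x : ℝ}
    (hx : x ∈ Icc R1 (rOne R1 R2 u)) (hM : u x + |deriv u x| ≤ M) :
    energy p f u (rOne R1 R2 u) ≤ M ^ p / (p / (p - 1)) + max (Fhat f 0) (Fhat f M) := by
  have hr := rOne_mem (u := u) h12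
  have hux : 0 ≤ u x := nonneg_of_mem_Icc_rOne h12
    (fun y hy => (hu.1 y hy).continuousAt.continuousWithinAt) (hu.2.2.1 ▸ hd) hx
  have hderiv : |deriv u x| ≤ M := by linarith
  calc energy p f u (rOne R1 R2 u) ≤ energy p f u x :=
        hu.energy_antitoneOn hp hR1 hf heq.1 ⟨hx.1, hx.2.trans hr.2⟩ hr hx.2
    _ ≤ M ^ p / (p / (p - 1)) + max (Fhat f 0) (Fhat f M) :=
        add_le_add
          (div_le_div_of_nonneg_right (rpow_le_rpow (abs_nonneg _) hderiv (by linarith))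
            (div_pos (by linarith) (by linarith)).le)
          (Fhat_le_max hf heq ⟨hux, by linarith [abs_nonneg (deriv u x)]⟩)

end CauchySol

theorem stmt9_general (p : ℝ) (hp : 1 < p) (N : ℕ)
    (R1 R2 : ℝ) (hR1 : 0 ≤ R1) (hR12 : R1 < R2)
    (f : ℝ → ℝ) (hreg : Freg f) (heq : Feq f) :
    (∀ d : ℝ, 0 < d → ∀ u : ℝ → ℝ, CauchySol p N R1 R2 (fhat f) u d →
      ∀ M : ℝ, 0 < M → ∀ x ∈ Icc R1 (rOne R1 R2 u), u x + |deriv u x| ≤ M →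
        energy p f u (rOne R1 R2 u) ≤ M ^ p / (p / (p - 1)) + max (Fhat f 0) (Fhat f M)) ∧
    (∀ U : ℝ → ℝ → ℝ,
      (∀ᶠ d in atTop, CauchySol p N R1 R2 (fhat f) (U d) d) →
      Tendsto (fun d => energy p f (U d) (rOne R1 R2 (U d))) atTop atTop →
      ∀ M : ℝ, ∀ᶠ d in atTop, ∀ x ∈ Icc R1 (rOne R1 R2 (U d)),
        M ≤ U d x + |deriv (U d) x|) := by
  refine ⟨fun d hd u hu M _ x hx hM =>
    hu.energy_rOne_le hp hR1 hR12.le hreg.1 heq hd.le hx hM, fun U hU hE M => ?_⟩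
  filter_upwards [hU, eventually_ge_atTop 0,
    hE.eventually_gt_atTop (M ^ p / (p / (p - 1)) + max (Fhat f 0) (Fhat f M))]
    with d hu hd hbig x hx
  by_contra! hsmall
  exact (hbig.trans_le (hu.energy_rOne_le hp hR1 hR12.le hreg.1 heq hd hx hsmall.le)).false

theorem stmt9 (p : ℝ) (hp : 1 < p) (N : ℕ) (hN : 1 ≤ N)
    (R1 R2 : ℝ) (hR1 : 0 ≤ R1) (hR12 : R1 < R2)
    (f : ℝ → ℝ) (hreg : Freg f) (heq : Feq f) (h0 : Fzero p f) :
    (∀ d : ℝ, 0 < d → ∀ u : ℝ → ℝ, CauchySol p N R1 R2 (fhat f) u d →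
      ∀ M : ℝ, 0 < M → ∀ x ∈ Icc R1 (rOne R1 R2 u), u x + |deriv u x| ≤ M →
        energy p f u (rOne R1 R2 u) ≤ M ^ p / (p / (p - 1)) + max (Fhat f 0) (Fhat f M)) ∧
    (∀ U : ℝ → ℝ → ℝ,
      (∀ᶠ d in atTop, CauchySol p N R1 R2 (fhat f) (U d) d) →
      Tendsto (fun d => energy p f (U d) (rOne R1 R2 (U d))) atTop atTop →
      ∀ M : ℝ, ∀ᶠ d in atTop, ∀ x ∈ Icc R1 (rOne R1 R2 (U d)),
        M ≤ U d x + |deriv (U d) x|) :=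
  stmt9_general p hp N R1 R2 hR1 hR12 f hreg heq
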